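/- Reduction axioms for DFD^τ: in the calculus DFD^τ, for every L-formula φ the following are derivable: (a) ○φ ↔ φ[v1/○v1,...,vN/○vN], where φ[v1/○v1,...,vN/○vN] is obtained from φ by replacing every occurrence of each basic variable v_i (inside every term) by ○v_i; and (b) φ ↔ 𝔗(φ), where 𝔗:L→L₋ is the translation into the fragment L₋ of formulas containing no occurrence of the formula-level operator ○φ (terms ○ⁿv are allowed), defined by: 𝔗 is the identity on atoms P(x1,...,xn) and D_Xy, commutes with ¬, ∧ and 𝖣_X, and 𝔗(○φ) := 𝔗(φ)[v1/○v1,...,vN/○vN]. -/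
import Mathlib

/-- Terms of DFD: `x ::= v | ○x`. -/
inductive Tm (V : Type) : Type where
  | base : V → Tm V
  | next : Tm V → Tm V
deriving DecidableEq

namespace Tm

variable {V : Type}

/-- The set of terms `○X := {○x : x ∈ X}`. -/
def nextSet [DecidableEq V] (X : Finset (Tm V)) : Finset (Tm V) := X.image Tm.next

/-- The number of `○`'s in a term. -/
def depth : Tm V → ℕ
  | .base _ => 0
  | .next x => x.depth + 1

/-- The basic variable underlying a term. -/
def baseVar : Tm V → V
  | .base v => v
  | .next x => x.baseVar

/-- The term `○ⁿ x`. -/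
def iter : ℕ → Tm V → Tm V
  | 0, x => x
  | n + 1, x => .next (iter n x)

/-- The set of terms `○ⁿ X`. -/
def iterSet [DecidableEq V] : ℕ → Finset (Tm V) → Finset (Tm V)
  | 0, X => X
  | n + 1, X => nextSet (iterSet n X)

end Tm

/-- Formulas of the language `L` of DFD, for the vocabulary `(V, Pred, ar)`. -/
inductive Fm (V Pred : Type) (ar : Pred → ℕ) : Type where
  | atom : (P : Pred) → (Fin (ar P) → Tm V) → Fm V Pred ar
  | neg : Fm V Pred ar → Fm V Pred ar
  | and : Fm V Pred ar → Fm V Pred ar → Fm V Pred ar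
  | next : Fm V Pred ar → Fm V Pred ar
  | dquant : Finset (Tm V) → Fm V Pred ar → Fm V Pred ar
  | datom : Finset (Tm V) → Tm V → Fm V Pred ar

namespace Fm

variable {V Pred : Type} {ar : Pred → ℕ}

/-- Material implication, defined from `¬` and `∧`. -/
def imp (φ ψ : Fm V Pred ar) : Fm V Pred ar := .neg (.and φ (.neg ψ))

/-- Material biconditional. -/
def iff (φ ψ : Fm V Pred ar) : Fm V Pred ar := .and (φ.imp ψ) (ψ.imp φ)

/-- The formula `○ⁿ φ`. -/
def iterNext : ℕ → Fm V Pred ar → Fm V Pred ar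
  | 0, φ => φ
  | n + 1, φ => .next (iterNext n φ)

/-- Boolean evaluation of a formula under a valuation of formulas; formulas that are not
negations or conjunctions are treated as propositional atoms. -/
def boolEval (v : Fm V Pred ar → Bool) : Fm V Pred ar → Bool
  | .neg φ => !(boolEval v φ)
  | .and φ ψ => boolEval v φ && boolEval v ψ
  | φ => v φ

/-- Classical propositional tautologies. -/
def Taut (φ : Fm V Pred ar) : Prop := ∀ v, boolEval v φ = true

/-- A fixed trivially valid formula `D_{{v₀}} v₀`, used as the empty conjunction. -/
def vtop [Inhabited V] : Fm V Pred ar := .datom {Tm.base default} (Tm.base default)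

/-- Conjunction of a list of formulas. -/
def bigAnd [Inhabited V] : List (Fm V Pred ar) → Fm V Pred ar
  | [] => vtop
  | φ :: l => l.foldl Fm.and φ

/-- The formula `D_X Y`: the conjunction of `D_X y` over `y ∈ Y`. -/
noncomputable def depF [Inhabited V] (X Y : Finset (Tm V)) : Fm V Pred ar :=
  bigAnd (Y.toList.map (Fm.datom X))

/-- Membership in the fragment `L^{≠∅}`: every index set of a dependence quantifier or
dependence atom is non-empty. -/
def neIdx : Fm V Pred ar → Prop
  | .atom _ _ => True
  | .neg φ => φ.neIdx
  | .and φ ψ => φ.neIdx ∧ ψ.neIdx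
  | .next φ => φ.neIdx
  | .dquant X φ => X.Nonempty ∧ φ.neIdx
  | .datom X _ => X.Nonempty

end Fm

/-- The set `V = {v₁, …, v_N}` of all basic variables, as a set of terms. -/
def fullV (V : Type) [Fintype V] [DecidableEq V] : Finset (Tm V) :=
  (Finset.univ : Finset V).image Tm.base
/-- The frame part of a standard relational model. -/
structure StdFrame (V : Type) where
  W : Type
  nonempty : Nonempty W
  g : W → W
  rel : V → W → W → Prop

/-- Extension of the relations `∼_v` to arbitrary terms: `s ∼_{○x} w iff g(s) ∼_x g(w)`. -/
def StdFrame.trel {V : Type} (F : StdFrame V) : Tm V → F.W → F.W → Prop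
  | .base v => F.rel v
  | .next x => fun s w => F.trel x (F.g s) (F.g w)

/-- The relation `∼_X`: intersection of the `∼_x` for `x ∈ X` (`∼_∅` is universal). -/
def StdFrame.srel {V : Type} (F : StdFrame V) (X : Finset (Tm V)) (s w : F.W) : Prop :=
  ∀ x ∈ X, F.trel x s w

/-- Standard relational models. -/
structure StdModel (V Pred : Type) (ar : Pred → ℕ) extends StdFrame V where
  equiv : ∀ v : V, Equivalence (rel v)
  gPres : ∀ s w, (∀ v : V, rel v s w) → ∀ v : V, rel v (g s) (g w)
  val : (P : Pred) → (Fin (ar P) → Tm V) → W → Prop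
  valClosed : ∀ (P : Pred) (args : Fin (ar P) → Tm V) (X : Finset (Tm V)) (s w : W),
      toStdFrame.srel X s w → (∀ i, args i ∈ X) → val P args s → val P args w

variable {V Pred : Type} {ar : Pred → ℕ}

/-- Truth of a formula at a state of a standard relational model. -/
def StdModel.sat (M : StdModel V Pred ar) : Fm V Pred ar → M.W → Prop
  | .atom P args, s => M.val P args s
  | .neg φ, s => ¬ M.sat φ s
  | .and φ ψ, s => M.sat φ s ∧ M.sat ψ s
  | .next φ, s => M.sat φ (M.g s)
  | .dquant X φ, s => ∀ t, M.toStdFrame.srel X s t → M.sat φ t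
  | .datom X y, s => ∀ t, M.toStdFrame.srel X s t → M.toStdFrame.trel y s t

/-- Dynamical dependence models. -/
structure DynModel (V Pred : Type) (ar : Pred → ℕ) where
  /-- the value domain `𝔻_v` of each basic variable -/
  Dom : V → Type
  /-- the set of states -/
  S : Type
  nonempty : Nonempty S
  /-- the dynamical map -/
  g : S → S
  /-- the dynamical variable interpreting each basic variable symbol -/
  val : (v : V) → S → Dom v
  /-- interpretation of predicates as relations on `⋃_v 𝔻_v` -/
  I : (P : Pred) → ((Fin (ar P)) → (Σ v : V, Dom v)) → Prop
  /-- states are uniquely determined by the values of all basic variables -/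
  sep : ∀ s t : S, (∀ v : V, val v s = val v t) → s = t

/-- The value of a term at a state (an element of `𝔻_x = 𝔻_{baseVar x}`). -/
def DynModel.tval (M : DynModel V Pred ar) : (x : Tm V) → M.S → M.Dom x.baseVar
  | .base v, s => M.val v s
  | .next x, s => M.tval x (M.g s)

/-- The value of a term at a state, as an element of `⋃_v 𝔻_v`. -/
def DynModel.tvalS (M : DynModel V Pred ar) (x : Tm V) (s : M.S) : Σ v : V, M.Dom v :=
  ⟨x.baseVar, M.tval x s⟩

/-- Value agreement `s =_X w`. -/
def DynModel.agree (M : DynModel V Pred ar) (X : Finset (Tm V)) (s w : M.S) : Prop :=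
  ∀ x ∈ X, M.tval x s = M.tval x w

/-- Truth of a formula at a state of a dynamical dependence model. -/
def DynModel.sat (M : DynModel V Pred ar) : Fm V Pred ar → M.S → Prop
  | .atom P args, s => M.I P (fun i => M.tvalS (args i) s)
  | .neg φ, s => ¬ M.sat φ s
  | .and φ ψ, s => M.sat φ s ∧ M.sat ψ s
  | .next φ, s => M.sat φ (M.g s)
  | .dquant X φ, s => ∀ w, M.agree X s w → M.sat φ w
  | .datom X y, s => ∀ w, M.agree X s w → M.tval y s = M.tval y w
section Tau

variable {V Pred : Type} {ar : Pred → ℕ}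

/-- The substitution `φ[v₁/○v₁, …, v_N/○v_N]`, replacing every occurrence of every basic
variable by its next-step term (so every term `x` becomes `○x`). -/
def Fm.shift [DecidableEq V] : Fm V Pred ar → Fm V Pred ar
  | .atom P args => .atom P fun i => Tm.next (args i)
  | .neg φ => (Fm.shift φ).neg
  | .and φ ψ => (Fm.shift φ).and (Fm.shift ψ)
  | .next φ => (Fm.shift φ).next
  | .dquant X φ => .dquant (Tm.nextSet X) (Fm.shift φ)
  | .datom X y => .datom (Tm.nextSet X) (Tm.next y)

/-- The translation `𝔗 : L → L₋` eliminating the formula-level next-time operator: it keeps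
atoms `P(x⃗)` and `D_X y` unchanged, commutes with `¬`, `∧` and `𝖣_X`, and sets
`𝔗(○φ) := 𝔗(φ)[v₁/○v₁, …, v_N/○v_N]`. -/
def Fm.tr [DecidableEq V] : Fm V Pred ar → Fm V Pred ar
  | .atom P args => .atom P args
  | .neg φ => (Fm.tr φ).neg
  | .and φ ψ => (Fm.tr φ).and (Fm.tr ψ)
  | .next φ => (Fm.tr φ).shift
  | .dquant X φ => .dquant X (Fm.tr φ)
  | .datom X y => .datom X y

variable [DecidableEq V] [Fintype V] [Inhabited V]

/-- The axioms of the calculus DFD^τ, apart from classical propositional tautologies: as DFD,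
but without `𝖣-○` and with Next-Time₁ and Next-Time₂ strengthened to equivalences. -/
inductive DFDTAxiom : Fm V Pred ar → Prop where
  | oDist (φ ψ : Fm V Pred ar) :
      DFDTAxiom ((Fm.next (φ.imp ψ)).imp ((Fm.next φ).imp (Fm.next ψ)))
  | funct (φ : Fm V Pred ar) :
      DFDTAxiom ((Fm.next φ.neg).iff (Fm.next φ).neg)
  | dDist (X : Finset (Tm V)) (φ ψ : Fm V Pred ar) :
      DFDTAxiom ((Fm.dquant X (φ.imp ψ)).imp ((Fm.dquant X φ).imp (Fm.dquant X ψ)))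
  | dIntro1 (P : Pred) (args : Fin (ar P) → Tm V) :
      DFDTAxiom ((Fm.atom P args).imp (Fm.dquant (Finset.image args Finset.univ) (Fm.atom P args)))
  | dIntro2 (X : Finset (Tm V)) (y : Tm V) :
      DFDTAxiom ((Fm.datom X y).imp (Fm.dquant X (Fm.datom X y)))
  | dT (X : Finset (Tm V)) (φ : Fm V Pred ar) :
      DFDTAxiom ((Fm.dquant X φ).imp φ)
  | d4 (X : Finset (Tm V)) (φ : Fm V Pred ar) :
      DFDTAxiom ((Fm.dquant X φ).imp (Fm.dquant X (Fm.dquant X φ)))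
  | d5 (X : Finset (Tm V)) (φ : Fm V Pred ar) :
      DFDTAxiom ((Fm.dquant X φ).neg.imp (Fm.dquant X (Fm.dquant X φ).neg))
  | depRef (X : Finset (Tm V)) (x : Tm V) (h : x ∈ X) :
      DFDTAxiom (Fm.datom X x)
  | depTrans (X Y Z : Finset (Tm V)) :
      DFDTAxiom (((Fm.depF X Y).and (Fm.depF Y Z)).imp (Fm.depF X Z))
  | determinism (v : V) :
      DFDTAxiom (Fm.datom (fullV V) (Tm.next (Tm.base v)))
  | transfer (X Y : Finset (Tm V)) (φ : Fm V Pred ar) :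
      DFDTAxiom (((Fm.depF X Y).and (Fm.dquant Y φ)).imp (Fm.dquant X φ))
  | atomicRed (P : Pred) (args : Fin (ar P) → Tm V) :
      DFDTAxiom ((Fm.next (Fm.atom P args)).iff (Fm.atom P fun i => Tm.next (args i)))
  | tNextTime1 (X : Finset (Tm V)) (φ : Fm V Pred ar) :
      DFDTAxiom ((Fm.next (Fm.dquant X φ)).iff (Fm.dquant (Tm.nextSet X) (Fm.next φ)))
  | tNextTime2 (X : Finset (Tm V)) (y : Tm V) :
      DFDTAxiom ((Fm.next (Fm.datom X y)).iff (Fm.datom (Tm.nextSet X) (Tm.next y)))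

/-- Derivability in the calculus DFD^τ. -/
inductive DFDTDeriv : Fm V Pred ar → Prop where
  | ax {φ : Fm V Pred ar} : DFDTAxiom φ → DFDTDeriv φ
  | taut {φ : Fm V Pred ar} : Fm.Taut φ → DFDTDeriv φ
  | mp {φ ψ : Fm V Pred ar} : DFDTDeriv (φ.imp ψ) → DFDTDeriv φ → DFDTDeriv ψ
  | dNec (X : Finset (Tm V)) {φ : Fm V Pred ar} : DFDTDeriv φ → DFDTDeriv (Fm.dquant X φ)
  | oNec {φ : Fm V Pred ar} : DFDTDeriv φ → DFDTDeriv (Fm.next φ)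

end Tau

/-- A timing map on a dynamical system `(S, g)`: `τ(s) = 0` on initial states (states not in
the range of `g`) and `τ(g(s)) = τ(s) + 1` (with `∞ + 1 = ∞`). -/
def IsTimingMap {S : Type} (g : S → S) (τ : S → ℕ∞) : Prop :=
  (∀ s, (∀ w, g w ≠ s) → τ s = 0) ∧ ∀ s, τ (g s) = τ s + 1

section Sync

variable {V Pred : Type} {ar : Pred → ℕ}

/-- Truth of a formula at a state of a timed dynamical dependence model under the
**synchronized semantics**: the dependence quantifier and dependence atoms are evaluated
using synchronized value agreement `s =^τ_X w` (value agreement plus equal time). -/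
def DynModel.satSync (M : DynModel V Pred ar) (τ : M.S → ℕ∞) :
    Fm V Pred ar → M.S → Prop
  | .atom P args, s => M.I P (fun i => M.tvalS (args i) s)
  | .neg φ, s => ¬ M.satSync τ φ s
  | .and φ ψ, s => M.satSync τ φ s ∧ M.satSync τ ψ s
  | .next φ, s => M.satSync τ φ (M.g s)
  | .dquant X φ, s => ∀ w, (M.agree X s w ∧ τ s = τ w) → M.satSync τ φ w
  | .datom X y, s => ∀ w, (M.agree X s w ∧ τ s = τ w) →
      (M.tval y s = M.tval y w ∧ τ s = τ w)

end Sync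

/-- A dynamical map is temporal iff it is injective. -/
def IsTemporal {S : Type} (g : S → S) : Prop := Function.Injective g

/-- Linear-time systems: temporal and acyclic. -/
def IsLinearTime {S : Type} (g : S → S) : Prop :=
  Function.Injective g ∧ ∀ (s : S) (n : ℕ), 1 ≤ n → g^[n] s ≠ s

/-- Linear-time systems with finite past: every state arises from an initial state in finitely
many steps. -/
def IsLinearTimeFinitePast {S : Type} (g : S → S) : Prop :=
  IsLinearTime g ∧ ∀ s : S, ∃ (n : ℕ) (s₀ : S), (∀ w, g w ≠ s₀) ∧ g^[n] s₀ = s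
section ReductionHelpers

variable {V Pred : Type} {ar : Pred → ℕ} [DecidableEq V] [Fintype V] [Inhabited V]

namespace Fm

@[simp] lemma boolEval_neg (v : Fm V Pred ar → Bool) (φ : Fm V Pred ar) :
    boolEval v φ.neg = !(boolEval v φ) := rfl

@[simp] lemma boolEval_and (v : Fm V Pred ar → Bool) (φ ψ : Fm V Pred ar) :
    boolEval v (φ.and ψ) = (boolEval v φ && boolEval v ψ) := rfl

end Fm

open Fm DFDTDeriv

private lemma taut1 (φ ψ : Fm V Pred ar) : DFDTDeriv ((φ.and ψ).imp φ) := by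
  apply DFDTDeriv.taut; intro v
  simp only [Fm.imp, Fm.boolEval_neg, Fm.boolEval_and]
  cases Fm.boolEval v φ <;> cases Fm.boolEval v ψ <;> rfl

private lemma taut2 (φ ψ : Fm V Pred ar) : DFDTDeriv ((φ.and ψ).imp ψ) := by
  apply DFDTDeriv.taut; intro v
  simp only [Fm.imp, Fm.boolEval_neg, Fm.boolEval_and]
  cases Fm.boolEval v φ <;> cases Fm.boolEval v ψ <;> rfl

private lemma taut3 (φ ψ : Fm V Pred ar) : DFDTDeriv (φ.imp (ψ.imp (φ.and ψ))) := by
  apply DFDTDeriv.taut; intro v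
  simp only [Fm.imp, Fm.boolEval_neg, Fm.boolEval_and]
  cases Fm.boolEval v φ <;> cases Fm.boolEval v ψ <;> rfl

/-- iff introduction -/
private lemma iffIntro {φ ψ : Fm V Pred ar} (h1 : DFDTDeriv (φ.imp ψ))
    (h2 : DFDTDeriv (ψ.imp φ)) : DFDTDeriv (φ.iff ψ) :=
  mp (mp (taut3 _ _) h1) h2

private lemma iffMp {φ ψ : Fm V Pred ar} (h : DFDTDeriv (φ.iff ψ)) :
    DFDTDeriv (φ.imp ψ) := mp (taut1 _ _) h

private lemma iffMpr {φ ψ : Fm V Pred ar} (h : DFDTDeriv (φ.iff ψ)) :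
    DFDTDeriv (ψ.imp φ) := mp (taut2 _ _) h

private lemma impTrans {φ ψ χ : Fm V Pred ar} (h1 : DFDTDeriv (φ.imp ψ))
    (h2 : DFDTDeriv (ψ.imp χ)) : DFDTDeriv (φ.imp χ) := by
  refine mp (mp ?_ h1) h2
  apply DFDTDeriv.taut; intro v
  simp only [Fm.imp, Fm.boolEval_neg, Fm.boolEval_and]
  cases Fm.boolEval v φ <;> cases Fm.boolEval v ψ <;> cases Fm.boolEval v χ <;> rfl

private lemma iffTrans {φ ψ χ : Fm V Pred ar} (h1 : DFDTDeriv (φ.iff ψ))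
    (h2 : DFDTDeriv (ψ.iff χ)) : DFDTDeriv (φ.iff χ) :=
  iffIntro (impTrans (iffMp h1) (iffMp h2)) (impTrans (iffMpr h2) (iffMpr h1))

private lemma iffSymm {φ ψ : Fm V Pred ar} (h : DFDTDeriv (φ.iff ψ)) :
    DFDTDeriv (ψ.iff φ) := iffIntro (iffMpr h) (iffMp h)

private lemma iffSelf (φ : Fm V Pred ar) : DFDTDeriv (φ.iff φ) := by
  apply DFDTDeriv.taut; intro v
  simp only [Fm.iff, Fm.imp, Fm.boolEval_neg, Fm.boolEval_and]
  cases Fm.boolEval v φ <;> rfl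

/-- negation congruence -/
private lemma negCong {φ ψ : Fm V Pred ar} (h : DFDTDeriv (φ.iff ψ)) :
    DFDTDeriv (φ.neg.iff ψ.neg) := by
  refine mp ?_ h
  apply DFDTDeriv.taut; intro v
  simp only [Fm.iff, Fm.imp, Fm.boolEval_neg, Fm.boolEval_and]
  cases Fm.boolEval v φ <;> cases Fm.boolEval v ψ <;> rfl

/-- conjunction congruence -/
private lemma andCong {φ φ' ψ ψ' : Fm V Pred ar} (h1 : DFDTDeriv (φ.iff φ'))
    (h2 : DFDTDeriv (ψ.iff ψ')) : DFDTDeriv ((φ.and ψ).iff (φ'.and ψ')) := by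
  refine mp (mp ?_ h1) h2
  apply DFDTDeriv.taut; intro v
  simp only [Fm.iff, Fm.imp, Fm.boolEval_neg, Fm.boolEval_and]
  cases Fm.boolEval v φ <;> cases Fm.boolEval v φ' <;>
    cases Fm.boolEval v ψ <;> cases Fm.boolEval v ψ' <;> rfl

private lemma oImp {φ ψ : Fm V Pred ar} (h : DFDTDeriv (φ.imp ψ)) :
    DFDTDeriv ((Fm.next φ).imp (Fm.next ψ)) :=
  mp (ax (DFDTAxiom.oDist φ ψ)) (oNec h)

private lemma oIff {φ ψ : Fm V Pred ar} (h : DFDTDeriv (φ.iff ψ)) :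
    DFDTDeriv ((Fm.next φ).iff (Fm.next ψ)) :=
  iffIntro (oImp (iffMp h)) (oImp (iffMpr h))

private lemma dImp (X : Finset (Tm V)) {φ ψ : Fm V Pred ar} (h : DFDTDeriv (φ.imp ψ)) :
    DFDTDeriv ((Fm.dquant X φ).imp (Fm.dquant X ψ)) :=
  mp (ax (DFDTAxiom.dDist X φ ψ)) (dNec X h)

private lemma dIff (X : Finset (Tm V)) {φ ψ : Fm V Pred ar} (h : DFDTDeriv (φ.iff ψ)) :
    DFDTDeriv ((Fm.dquant X φ).iff (Fm.dquant X ψ)) :=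
  iffIntro (dImp X (iffMp h)) (dImp X (iffMpr h))

/-- ○ distributes over ∧ as an equivalence. -/
private lemma oAnd (φ ψ : Fm V Pred ar) :
    DFDTDeriv ((Fm.next (φ.and ψ)).iff ((Fm.next φ).and (Fm.next ψ))) := by
  apply iffIntro
  · -- forward
    have h1 : DFDTDeriv ((Fm.next (φ.and ψ)).imp (Fm.next φ)) := oImp (taut1 φ ψ)
    have h2 : DFDTDeriv ((Fm.next (φ.and ψ)).imp (Fm.next ψ)) := oImp (taut2 φ ψ)
    refine mp (mp ?_ h1) h2
    apply DFDTDeriv.taut; intro v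
    simp only [Fm.imp, Fm.boolEval_neg, Fm.boolEval_and]
    cases Fm.boolEval v (Fm.next (φ.and ψ)) <;> cases Fm.boolEval v (Fm.next φ) <;>
      cases Fm.boolEval v (Fm.next ψ) <;> rfl
  · -- backward
    have h1 : DFDTDeriv ((Fm.next φ).imp (Fm.next (ψ.imp (φ.and ψ)))) := oImp (taut3 φ ψ)
    have h2 : DFDTDeriv ((Fm.next φ).imp ((Fm.next ψ).imp (Fm.next (φ.and ψ)))) :=
      impTrans h1 (ax (DFDTAxiom.oDist ψ (φ.and ψ)))
    refine mp ?_ h2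
    apply DFDTDeriv.taut; intro v
    simp only [Fm.imp, Fm.boolEval_neg, Fm.boolEval_and]
    cases Fm.boolEval v (Fm.next φ) <;> cases Fm.boolEval v (Fm.next ψ) <;>
      cases Fm.boolEval v (Fm.next (φ.and ψ)) <;> rfl

/-- Part (a): the first reduction axiom. -/
private lemma shiftRed : ∀ φ : Fm V Pred ar, DFDTDeriv ((Fm.next φ).iff φ.shift) := by
  intro φ
  induction φ with
  | atom P args => exact ax (DFDTAxiom.atomicRed P args)
  | neg φ ih =>
    exact iffTrans (ax (DFDTAxiom.funct φ)) (negCong ih)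
  | and φ ψ ihφ ihψ =>
    exact iffTrans (oAnd φ ψ) (andCong ihφ ihψ)
  | next φ ih =>
    exact oIff ih
  | dquant X φ ih =>
    exact iffTrans (ax (DFDTAxiom.tNextTime1 X φ)) (dIff _ ih)
  | datom X y => exact ax (DFDTAxiom.tNextTime2 X y)

end ReductionHelpers


/-- **Reduction axioms for DFD^τ**: for every `L`-formula `φ`, the calculus DFD^τ derives
(a) `○φ ↔ φ[v₁/○v₁, …, v_N/○v_N]`, and (b) `φ ↔ 𝔗(φ)`, where `𝔗` is the translation into the
fragment `L₋` without the formula-level next-time operator. -/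
theorem DFDT_reduction_axioms {V Pred : Type} [DecidableEq V] [Fintype V] [Inhabited V]
    {ar : Pred → ℕ} :
    ∀ φ : Fm V Pred ar,
      DFDTDeriv ((Fm.next φ).iff φ.shift) ∧ DFDTDeriv (φ.iff φ.tr) := by
  intro φ
  refine ⟨shiftRed φ, ?_⟩
  induction φ with
  | atom P args => exact iffSelf _
  | neg φ ih => exact negCong ih
  | and φ ψ ihφ ihψ => exact andCong ihφ ihψ
  | next φ ih => exact iffTrans (oIff ih) (shiftRed φ.tr)
  | dquant X φ ih => exact dIff X ih
  | datom X y => exact iffSelf _
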